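/- arXiv:2409.07864 — 2 statements merged into one kernel-verified Lean document; each statement's English description precedes it below -/
import Mathlib

section
/- Let k be a field and let K = k(t₁, …, tₙ) be a purely transcendental extension with n ≥ 1, and let L be a finite extension of K. Then for every integer l ≥ 1, the element t₁^l is not divisible by p in the multiplicative group L*, for any prime p with p > l and p not dividing [L : K]. In particular, no power of t₁ is a divisible element of L*. -/
open MvPolynomial

/-
Taking norms from `L` down to `K = k(t₁, …, tₙ)`, an equation `x ^ p = t₁ ^ l` in `L` becomes
`N(x) ^ p = t₁ ^ (l * [L : K])` in `K`. Since `k[t₁, …, tₙ]` is integrally closed, `N(x)` is a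
polynomial, and comparing the multiplicity of the prime `t₁` on both sides gives
`p ∣ l * [L : K]`, which is impossible for a prime `p > l` not dividing `[L : K]`.
-/

theorem dvd_of_pow_eq_prime_pow {R : Type*} [CommMonoidWithZero R] [IsCancelMulZero R]
    {q a : R} (hq : Prime q) {p m : ℕ} (h : a ^ p = q ^ m) : p ∣ m := by
  have hmult : (p : ℕ∞) * emultiplicity q a = m := by
    rw [← emultiplicity_pow hq, h, emultiplicity_pow_self_of_prime hq]
  cases ha : emultiplicity q a with
  | top =>
    rw [ha] at hmult
    obtain rfl : p = 0 := by
      by_contra hp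
      simp [ENat.mul_top (Nat.cast_ne_zero.mpr hp)] at hmult
    rw [Nat.cast_zero, zero_mul] at hmult
    exact zero_dvd_iff.mpr (by exact_mod_cast hmult.symm)
  | coe e =>
    rw [ha] at hmult
    exact ⟨e, by exact_mod_cast hmult.symm⟩

theorem dvd_of_pow_eq_algebraMap_prime_pow {R K : Type*} [CommRing R] [IsDomain R]
    [IsIntegrallyClosed R] [Field K] [Algebra R K] [IsFractionRing R K] {q : R} (hq : Prime q)
    {p m : ℕ} (hp : 0 < p) {y : K} (hy : y ^ p = algebraMap R K q ^ m) : p ∣ m := by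
  have hint : IsIntegral R (y ^ p) := by
    rw [hy, ← map_pow]
    exact isIntegral_algebraMap
  obtain ⟨a, rfl⟩ := IsIntegrallyClosed.exists_algebraMap_eq_of_isIntegral_pow hp hint
  refine dvd_of_pow_eq_prime_pow hq (a := a) (IsFractionRing.injective R K ?_)
  simpa only [map_pow] using hy

theorem dvd_mul_finrank_of_pow_eq_algebraMap_prime_pow {R K L : Type*} [CommRing R] [IsDomain R]
    [IsIntegrallyClosed R] [Field K] [Algebra R K] [IsFractionRing R K] [Field L] [Algebra K L]
    [FiniteDimensional K L] {q : R} (hq : Prime q) {p l : ℕ} (hp : 0 < p) {x : L}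
    (hx : x ^ p = algebraMap K L (algebraMap R K q) ^ l) : p ∣ l * Module.finrank K L := by
  refine dvd_of_pow_eq_algebraMap_prime_pow hq hp (y := Algebra.norm K x) ?_
  rw [← map_pow, hx, ← map_pow, Algebra.norm_algebraMap, ← pow_mul]

/-- Let `K = k(t₁, …, tₙ)` (`n ≥ 1`) and let `L` be a finite extension of `K`.
Then for every `l ≥ 1`, the element `t₁ˡ` is not divisible by `p` in `Lˣ` for
any prime `p > l` not dividing `[L : K]`; in particular no power of `t₁` is a
divisible element of `Lˣ`. -/
theorem stmt2 {k : Type*} [Field k] {n : ℕ} (hn : 0 < n)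
    (L : Type*) [Field L] [Algebra (FractionRing (MvPolynomial (Fin n) k)) L]
    [FiniteDimensional (FractionRing (MvPolynomial (Fin n) k)) L]
    (t : L)
    (ht : t = algebraMap (FractionRing (MvPolynomial (Fin n) k)) L
      (algebraMap (MvPolynomial (Fin n) k) (FractionRing (MvPolynomial (Fin n) k))
        (X ⟨0, hn⟩))) :
    (∀ l : ℕ, 1 ≤ l → ∀ p : ℕ, p.Prime → l < p →
      ¬ (p ∣ Module.finrank (FractionRing (MvPolynomial (Fin n) k)) L) →
      ¬ ∃ x : Lˣ, (x : L) ^ p = t ^ l) ∧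
    (∀ l : ℕ, 1 ≤ l → ¬ ∀ m : ℕ, 0 < m → ∃ x : Lˣ, (x : L) ^ m = t ^ l) := by
  set d := Module.finrank (FractionRing (MvPolynomial (Fin n) k)) L
  have not_pow_eq : ∀ l : ℕ, 1 ≤ l → ∀ p : ℕ, p.Prime → l < p → ¬ p ∣ d →
      ¬ ∃ x : Lˣ, (x : L) ^ p = t ^ l := by
    rintro l hl p hp hlp hpd ⟨x, hx⟩
    rw [ht] at hx
    rcases hp.dvd_mul.mp (dvd_mul_finrank_of_pow_eq_algebraMap_prime_pow X_prime hp.pos hx)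
      with hpl | hpd'
    · exact absurd (Nat.le_of_dvd hl hpl) (by omega)
    · exact hpd hpd'
  refine ⟨not_pow_eq, fun l hl hall => ?_⟩
  obtain ⟨p, hpge, hp⟩ := Nat.exists_infinite_primes (max l d + 1)
  have hpd : ¬ p ∣ d := fun h => by
    have := Nat.le_of_dvd Module.finrank_pos h
    omega
  exact not_pow_eq l hl p hp (by omega) hpd (hall p hp.pos)
end

section
/- Let F ⊆ L be a finite Galois extension of fields of characteristic zero, and let p/q ∈ L(t) be a rational function in one variable with p, q ∈ L[t], q ≠ 0, such that p(n)/q(n) ∈ F for all sufficiently large natural numbers n. Then p/q, as an element of L(t), lies in the subfield F(t). -/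
/-!
Write `f^σ` for `f` with `σ` applied to its coefficients. The values of `p/q` at the
integers `n` are fixed by every `σ ∈ Gal(L/F)`, and so are the points `n` themselves; hence
`p^σ q` and `p q^σ` agree at infinitely many points, and `p^σ q = p q^σ`. Multiplying
numerator and denominator by `∏_{σ ≠ 1} q^σ` turns `p/q` into a quotient of two
Galois-invariant polynomials, whose coefficients lie in `F`.
-/

open Polynomial Filter

namespace Polynomial

theorem eventually_eval_natCast_ne_zero {R : Type*} [CommRing R] [IsDomain R] [CharZero R]
    {q : R[X]} (hq : q ≠ 0) : ∀ᶠ n : ℕ in atTop, q.eval (n : R) ≠ 0 := by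
  rw [← Nat.cofinite_eq_atTop]
  exact ((q.finite_setOfPred_isRoot hq).preimage Nat.cast_injective.injOn)
    |>.eventually_cofinite_notMem

theorem map_mul_eq_mul_map_of_frequently_fixed {L : Type*} [Field L] [CharZero L] (σ : L →+* L)
    {p q : L[X]}
    (h : ∃ᶠ n : ℕ in atTop, q.eval (n : L) ≠ 0 ∧
      σ (p.eval (n : L) / q.eval (n : L)) = p.eval (n : L) / q.eval (n : L)) :
    p.map σ * q = p * q.map σ := by
  apply eq_of_infinite_eval_eq
  refine ((Nat.frequently_atTop_iff_infinite.1 h).image Nat.cast_injective.injOn).mono ?_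
  rintro _ ⟨n, ⟨hqn, hfix⟩, rfl⟩
  have hσqn : σ (q.eval (n : L)) ≠ 0 := (_root_.map_ne_zero σ).2 hqn
  rw [map_div₀, div_eq_div_iff hσqn hqn] at hfix
  simp only [Set.mem_ofPred_eq, eval_mul, eval_map, eval₂_at_natCast]
  exact hfix

section Galois

variable {F L : Type*} [Field F] [Field L] [Algebra F L] [FiniteDimensional F L]

theorem mem_lifts_of_forall_map_eq [IsGalois F L] {P : L[X]}
    (h : ∀ σ : L ≃ₐ[F] L, P.map (σ : L →+* L) = P) :
    P ∈ lifts (algebraMap F L) :=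
  (lifts_iff_coeff_lifts P).2 fun n ↦ (IsGalois.mem_range_algebraMap_iff_fixed _).2 fun σ ↦
    (coeff_map _ _).symm.trans (congrArg (coeff · n) (h σ))

theorem map_prod_map_algEquiv (q : L[X]) (σ : L ≃ₐ[F] L) :
    (∏ τ : L ≃ₐ[F] L, q.map (τ : L →+* L)).map (σ : L →+* L) =
      ∏ τ : L ≃ₐ[F] L, q.map (τ : L →+* L) := by
  simp only [Polynomial.map_prod, map_map]
  exact Fintype.prod_equiv (Equiv.mulLeft σ) _ _ fun τ ↦ rfl

theorem mul_prod_erase_one_map_algEquiv [DecidableEq (L ≃ₐ[F] L)] (q : L[X]) :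
    q * ∏ τ ∈ Finset.univ.erase (1 : L ≃ₐ[F] L), q.map (τ : L →+* L) =
      ∏ τ : L ≃ₐ[F] L, q.map (τ : L →+* L) := by
  rw [← Finset.mul_prod_erase Finset.univ _ (Finset.mem_univ 1)]
  congr 1
  exact map_id.symm

theorem exists_map_mul_eq_of_forall_map_mul_eq [IsGalois F L] {p q : L[X]} (hq : q ≠ 0)
    (h : ∀ σ : L ≃ₐ[F] L, p.map (σ : L →+* L) * q = p * q.map (σ : L →+* L)) :
    ∃ p' q' : F[X], q' ≠ 0 ∧ p * q'.map (algebraMap F L) = q * p'.map (algebraMap F L) := by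
  classical
  set c := ∏ τ ∈ Finset.univ.erase (1 : L ≃ₐ[F] L), q.map (τ : L →+* L)
  have hqc : q * c = ∏ τ : L ≃ₐ[F] L, q.map (τ : L →+* L) :=
    mul_prod_erase_one_map_algEquiv q
  have hqc_inv (σ : L ≃ₐ[F] L) : (q * c).map (σ : L →+* L) = q * c := by
    rw [hqc, map_prod_map_algEquiv]
  have hpc_inv (σ : L ≃ₐ[F] L) : (p * c).map (σ : L →+* L) = p * c := by
    refine mul_right_cancel₀ ((Polynomial.map_ne_zero_iff (σ : L →+* L).injective).2 hq) ?_
    calc (p * c).map (σ : L →+* L) * q.map (σ : L →+* L)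
        = p.map (σ : L →+* L) * (q * c).map (σ : L →+* L) := by
          simp only [Polynomial.map_mul]; ring
      _ = p * c * q.map (σ : L →+* L) := by
          rw [hqc_inv, ← mul_assoc, h σ]; ring
  obtain ⟨p', hp'⟩ := mem_lifts_of_forall_map_eq hpc_inv
  obtain ⟨q', hq'⟩ := mem_lifts_of_forall_map_eq hqc_inv
  rw [coe_mapRingHom] at hp' hq'
  refine ⟨p', q', ?_, ?_⟩
  · rintro rfl
    rw [Polynomial.map_zero, hqc, eq_comm, Finset.prod_eq_zero_iff] at hq'
    obtain ⟨σ, -, hσ⟩ := hq'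
    exact hq ((Polynomial.map_eq_zero_iff (σ : L →+* L).injective).1 hσ)
  · rw [hp', hq']
    ring

end Galois

end Polynomial

/-- Let `F ⊆ L` be a finite Galois extension of fields of characteristic zero
and `p, q ∈ L[t]` with `q ≠ 0` such that `p(n)/q(n) ∈ F` for all sufficiently
large natural numbers `n` (with `q(n) ≠ 0`).  Then `p/q ∈ F(t)`: there are
polynomials `p', q'` over `F` with `q' ≠ 0` and `p·q' = q·p'`. -/
theorem stmt13 {L : Type*} [Field L] [CharZero L] (F : Subfield L)
    [FiniteDimensional F L] [IsGalois F L]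
    (p q : Polynomial L) (hq : q ≠ 0)
    (h : ∃ n₀ : ℕ, ∀ n : ℕ, n₀ ≤ n → q.eval (n : L) ≠ 0 →
      p.eval (n : L) / q.eval (n : L) ∈ F) :
    ∃ p' q' : Polynomial F, q' ≠ 0 ∧
      p * q'.map (algebraMap F L) = q * p'.map (algebraMap F L) := by
  obtain ⟨n₀, h⟩ := h
  refine exists_map_mul_eq_of_forall_map_mul_eq hq fun σ ↦
    map_mul_eq_mul_map_of_frequently_fixed (σ : L →+* L) ?_
  refine ((eventually_ge_atTop n₀).and (eventually_eval_natCast_ne_zero hq)).frequently.mono ?_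
  rintro n ⟨hn, hqn⟩
  exact ⟨hqn, σ.commutes (⟨_, h n hn hqn⟩ : F)⟩
end
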